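/- arXiv:1608.01490 — 2 statements merged into one kernel-verified Lean document; each statement's English description precedes it below -/
import Mathlib

section
/- Let A be an integral domain over a field K of characteristic zero and D a locally nilpotent K-derivation of A. If D(a) = a·b for some a, b ∈ A, then D(a) = 0. -/
/-!
For `x ≠ 0` let `deg x` be the largest `m` with `D^[m] x ≠ 0`. By the Leibniz rule the only
surviving term of `D^[deg a + deg b] (a * b)` is `C(deg a + deg b, deg a) • D^[deg a] a * D^[deg b] b`,
which is nonzero in a domain of characteristic zero, so `deg (a * b) = deg a + deg b`. But
`a * b = D a` has degree below `deg a`, so `a` and `b` cannot both be nonzero.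
-/

open Finset

namespace Derivation

section CommSemiring

variable {R A : Type*} [CommSemiring R] [CommSemiring A] [Algebra R A] (D : Derivation R A A)

theorem iterate_apply_mul (n : ℕ) (a b : A) :
    (⇑D)^[n] (a * b) =
      ∑ ij ∈ antidiagonal n, n.choose ij.1 • ((⇑D)^[ij.1] a * (⇑D)^[ij.2] b) := by
  induction n with
  | zero => simp
  | succ n ih =>
    rw [sum_antidiagonal_choose_succ_nsmul (fun i j => (⇑D)^[i] a * (⇑D)^[j] b) n]
    simp only [Function.iterate_succ_apply', ih, map_sum, map_nsmul, leibniz, smul_eq_mul,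
      nsmul_add, sum_add_distrib]
    congr 1
    refine sum_congr rfl fun ⟨i, j⟩ hij => ?_
    rw [n.choose_symm_of_eq_add (mem_antidiagonal.1 hij).symm]
    ring

variable {D}

theorem iterate_eq_zero_of_le {x : A} {i j : ℕ} (hi : (⇑D)^[i] x = 0) (hij : i ≤ j) :
    (⇑D)^[j] x = 0 := by
  obtain ⟨k, rfl⟩ := Nat.exists_eq_add_of_le hij
  rw [add_comm, Function.iterate_add_apply, hi, Function.iterate_fixed (map_zero D)]

theorem exists_iterate_ne_zero_and_iterate_succ_eq_zero {x : A} (hx : x ≠ 0)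
    (hnil : ∃ n, (⇑D)^[n] x = 0) : ∃ m, (⇑D)^[m] x ≠ 0 ∧ (⇑D)^[m + 1] x = 0 := by
  obtain ⟨n, hn⟩ := hnil
  by_contra! h
  have hne : ∀ m, (⇑D)^[m] x ≠ 0 := fun m => by
    induction m with
    | zero => exact hx
    | succ m ih => exact h m ih
  exact hne n hn

theorem iterate_apply_mul_of_iterate_succ_eq_zero {a b : A} {m n : ℕ}
    (ha : (⇑D)^[m + 1] a = 0) (hb : (⇑D)^[n + 1] b = 0) :
    (⇑D)^[m + n] (a * b) = (m + n).choose m • ((⇑D)^[m] a * (⇑D)^[n] b) := by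
  rw [iterate_apply_mul, sum_eq_single_of_mem (m, n) (mem_antidiagonal.2 rfl)]
  rintro ⟨i, j⟩ hij hne
  replace hij : i + j = m + n := HasAntidiagonal.mem_antidiagonal.1 hij
  dsimp only
  rcases lt_or_gt_of_ne (fun hi : i = m => hne (by ext <;> omega)) with hi | hi
  · rw [iterate_eq_zero_of_le hb (by omega : n + 1 ≤ j), mul_zero, smul_zero]
  · rw [iterate_eq_zero_of_le ha (by omega : m + 1 ≤ i), zero_mul, smul_zero]

end CommSemiring

variable {R A : Type*} [CommSemiring R] [CommRing A] [IsDomain A] [CharZero A] [Algebra R A]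
  {D : Derivation R A A}

theorem iterate_apply_mul_ne_zero {a b : A} {m n : ℕ}
    (ha : (⇑D)^[m] a ≠ 0) (ha' : (⇑D)^[m + 1] a = 0)
    (hb : (⇑D)^[n] b ≠ 0) (hb' : (⇑D)^[n + 1] b = 0) :
    (⇑D)^[m + n] (a * b) ≠ 0 := by
  rw [iterate_apply_mul_of_iterate_succ_eq_zero ha' hb', nsmul_eq_mul]
  exact mul_ne_zero (Nat.cast_ne_zero.2 (Nat.choose_pos (by omega)).ne') (mul_ne_zero ha hb)

theorem eq_zero_or_eq_zero_of_apply_eq_mul {a b : A} (hnila : ∃ n, (⇑D)^[n] a = 0)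
    (hnilb : ∃ n, (⇑D)^[n] b = 0) (h : D a = a * b) : a = 0 ∨ b = 0 := by
  by_contra! ⟨ha, hb⟩
  obtain ⟨m, ham, ham'⟩ := exists_iterate_ne_zero_and_iterate_succ_eq_zero ha hnila
  obtain ⟨n, hbn, hbn'⟩ := exists_iterate_ne_zero_and_iterate_succ_eq_zero hb hnilb
  apply iterate_apply_mul_ne_zero ham ham' hbn hbn'
  rw [← h, ← Function.iterate_succ_apply]
  exact iterate_eq_zero_of_le ham' (by omega)

end Derivation

/-- If `D` is a locally nilpotent derivation of an integral domain `A` over a field of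
characteristic zero and `D a = a * b`, then `D a = 0`. -/
theorem lnd_eigen_zero
    (K : Type*) [Field K] [CharZero K]
    (A : Type*) [CommRing A] [IsDomain A] [Algebra K A]
    (D : Derivation K A A)
    (hD : ∀ a : A, ∃ n : ℕ, (fun x => D x)^[n] a = 0)
    (a b : A) (h : D a = a * b) :
    D a = 0 := by
  have : CharZero A := charZero_of_injective_algebraMap (algebraMap K A).injective
  rcases D.eq_zero_or_eq_zero_of_apply_eq_mul (hD a) (hD b) h with rfl | rfl
  · exact map_zero D
  · rw [h, mul_zero]
end

section
/- Let A be an integral domain over an algebraically closed field K of characteristic zero. If L is a locally finite-dimensional Lie subalgebra of Der_K(A) with every element of L locally nilpotent as a derivation, then L is a locally nilpotent Lie algebra (every finitely generated subalgebra of L is nilpotent). -/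
/-!
By Engel's theorem it suffices that `ad x` is nilpotent on the finite-dimensional Lie algebra
generated by `s`; over an algebraically closed field this means that `ad x` has no eigenvalue
`μ ≠ 0`. If `⁅x, y⁆ = μ • y`, then `y ∘ x = (x - μ) ∘ y`, so `y` maps the kernel of `x ^ m` into
the kernel of `(x - μ) ^ m`. Since `x` is locally nilpotent, every `y a` therefore lies in the
generalized eigenspaces of `x` for both `0` and `μ`, which meet only in `0`.
-/

open Module End

namespace Module.End

variable {K V : Type*} [Field K] [IsAlgClosed K] [AddCommGroup V] [Module K V]
  [FiniteDimensional K V]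

theorem isNilpotent_of_forall_hasEigenvalue_eq_zero (f : End K V)
    (h : ∀ μ, f.HasEigenvalue μ → μ = 0) : IsNilpotent f := by
  have hbot : ∀ μ ≠ 0, f.maxGenEigenspace μ = ⊥ := fun μ hμ ↦ by
    by_contra hne
    rw [maxGenEigenspace_eq_genEigenspace_finrank] at hne
    exact hμ (h μ (hasEigenvalue_of_hasGenEigenvalue hne))
  have htop : f.maxGenEigenspace 0 = ⊤ := by
    rw [← iSup_maxGenEigenspace_eq_top f]
    refine le_antisymm (le_iSup _ 0) (iSup_le fun μ ↦ ?_)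
    obtain rfl | hμ := eq_or_ne μ 0
    · rfl
    · simp [hbot μ hμ]
  rw [maxGenEigenspace_eq_genEigenspace_finrank, genEigenspace_nat, zero_smul, sub_zero,
    LinearMap.ker_eq_top] at htop
  exact ⟨_, htop⟩

end Module.End

namespace Derivation

variable {R A : Type*} [CommRing R] [CommRing A] [Algebra R A]

theorem semiconjBy_toLinearMap_of_lie_eq_smul {D E : Derivation R A A} {μ : R} (h : ⁅D, E⁆ = μ • E) :
    SemiconjBy (E : End R A) D (D - μ • 1) := by
  ext a
  have := congr($h a)
  simp only [commutator_apply, smul_apply] at this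
  simp only [Module.End.mul_apply, LinearMap.sub_apply, LinearMap.smul_apply, Module.End.one_apply,
    coeFn_coe]
  rw [← this]; abel

theorem eq_zero_of_lie_eq_smul [IsDomain R] [IsTorsionFree R A] {D E : Derivation R A A} {μ : R}
    (hμ : μ ≠ 0) (hD : ∀ a, ∃ n, (⇑D)^[n] a = 0) (h : ⁅D, E⁆ = μ • E) : E = 0 := by
  ext a
  obtain ⟨m, hm⟩ := hD a
  obtain ⟨n, hn⟩ := hD (E a)
  have hμ_gen : E a ∈ maxGenEigenspace (D : End R A) μ := by
    refine (mem_maxGenEigenspace _ _ _).2 ⟨m, ?_⟩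
    calc (((D : End R A) - μ • 1) ^ m) (E a)
        = (E : End R A) (((D : End R A) ^ m) a) :=
          (LinearMap.congr_fun ((semiconjBy_toLinearMap_of_lie_eq_smul h).pow_right m) a).symm
      _ = 0 := by simp only [Module.End.pow_apply, coeFn_coe, hm, map_zero]
  have h0_gen : E a ∈ maxGenEigenspace (D : End R A) 0 :=
    (mem_maxGenEigenspace _ _ _).2 ⟨n, by simpa [Module.End.pow_apply] using hn⟩
  exact Submodule.disjoint_def.1 (disjoint_genEigenspace _ hμ ⊤ ⊤) _ hμ_gen h0_gen

end Derivation

theorem locally_finite_lnd_subalgebra_locally_nilpotent_general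
    (K : Type*) [Field K] [IsAlgClosed K]
    (A : Type*) [CommRing A] [Algebra K A]
    (L : LieSubalgebra K (Derivation K A A))
    (hfin : ∀ s : Finset (Derivation K A A), (s : Set (Derivation K A A)) ⊆ L →
      FiniteDimensional K (LieSubalgebra.lieSpan K (Derivation K A A) (s : Set (Derivation K A A))))
    (hL : ∀ D ∈ L, ∀ a : A, ∃ n : ℕ, (fun x => D x)^[n] a = 0) :
    ∀ s : Finset (Derivation K A A), (s : Set (Derivation K A A)) ⊆ L →
      LieRing.IsNilpotent
        (LieSubalgebra.lieSpan K (Derivation K A A) (s : Set (Derivation K A A))) := by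
  intro s hs
  have : FiniteDimensional K _ := hfin s hs
  rw [LieAlgebra.isNilpotent_iff_forall (R := K)]
  intro x
  refine isNilpotent_of_forall_hasEigenvalue_eq_zero _ fun μ hμ ↦ by_contra fun hμ0 ↦ ?_
  obtain ⟨y, hy⟩ := hμ.exists_hasEigenvector
  have hx : (x : Derivation K A A) ∈ L := LieSubalgebra.lieSpan_le.mpr hs x.2
  have hxy : ⁅(x : Derivation K A A), (y : Derivation K A A)⁆ = μ • (y : Derivation K A A) :=
    congrArg Subtype.val hy.apply_eq_smul
  exact hy.2 (Subtype.ext (Derivation.eq_zero_of_lie_eq_smul hμ0 (hL _ hx) hxy))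

/-- A locally finite Lie subalgebra of `Der_K(A)` consisting of locally nilpotent derivations
is a locally nilpotent Lie algebra: every finitely generated subalgebra is nilpotent. -/
theorem locally_finite_lnd_subalgebra_locally_nilpotent
    (K : Type*) [Field K] [IsAlgClosed K] [CharZero K]
    (A : Type*) [CommRing A] [IsDomain A] [Algebra K A]
    (L : LieSubalgebra K (Derivation K A A))
    (hfin : ∀ s : Finset (Derivation K A A), (s : Set (Derivation K A A)) ⊆ L →
      FiniteDimensional K (LieSubalgebra.lieSpan K (Derivation K A A) (s : Set (Derivation K A A))))
    (hL : ∀ D ∈ L, ∀ a : A, ∃ n : ℕ, (fun x => D x)^[n] a = 0) :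
    ∀ s : Finset (Derivation K A A), (s : Set (Derivation K A A)) ⊆ L →
      LieRing.IsNilpotent
        (LieSubalgebra.lieSpan K (Derivation K A A) (s : Set (Derivation K A A))) :=
  locally_finite_lnd_subalgebra_locally_nilpotent_general K A L hfin hL
end
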